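/- Let C be a cycle of π and let (i = i_1, …, i_{r+1} = m = j_{r+1}, j_r, …, j_1 = i') be the best b-staircase on C with respect to π. Then for every k the level sets computed for π^{−1} satisfy E_k(π^{−1}) ∩ C = E_k(π) ∩ C, and the reversed sequence (i' = j_1, j_2, …, j_{r+1} = m = i_{r+1}, i_r, …, i_1 = i) is the best b-staircase on the cycle C of π^{−1}; in particular, the middle of the best b-staircase is unchanged by inverting the cycle. -/

import Mathlib

/-!
The filter defining `E_{r+1}` is symmetric in `π` and `π⁻¹`, so the level sets of `π⁻¹` are those
of `π`. On each level set `E`, the first-return maps along `π` and along `π⁻¹` are mutually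
inverse, hence so are their `b`-th iterates; walking the staircase with `π⁻¹` from its end `i'`
therefore retraces it backwards and reaches the same middle. A staircase of size `r` always extends
to an almost staircase of size `r + 1`, so bestness just says `|E_{r+1} ∩ C| ≤ b`, a condition
that `π` and `π⁻¹` share.
-/

attribute [local instance] Classical.propDecidable

variable {n : ℕ}

/-- The first element of `E` encountered strictly after `x` when following `π` along its cycle
(`x` itself if no element of `E` is reachable).  For `E = E_r` this is the map `π_r`. -/
noncomputable def nextIn (π : Equiv.Perm (Fin n)) (E : Finset (Fin n)) (x : Fin n) : Fin n :=
  if h : ∃ k, 0 < k ∧ (⇑π)^[k] x ∈ E then (⇑π)^[Nat.find h] x else x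

/-- `b`-fold iteration of `nextIn`; for `E = E_r` this is `π_r^b`. -/
noncomputable def stepB (π : Equiv.Perm (Fin n)) (b : ℕ) (E : Finset (Fin n)) (x : Fin n) :
    Fin n :=
  (nextIn π E)^[b] x

/-- `level π b r` is the set `E_{r+1}` (0-indexed): `level π b 0 = E_1 = [n]`, and `E_{r+1}`
consists of the elements `i` of `E_r` with `i < π_r^k(i)` for all `k ∈ {−b,…,b} \ {0}`. -/
noncomputable def level (π : Equiv.Perm (Fin n)) (b : ℕ) : ℕ → Finset (Fin n)
  | 0 => Finset.univ
  | r + 1 =>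
    (level π b r).filter fun i =>
      (∀ k ∈ Finset.Icc 1 b, i < (nextIn π (level π b r))^[k] i) ∧
      (∀ k ∈ Finset.Icc 1 b, i < (nextIn π⁻¹ (level π b r))^[k] i)

/-- The cycle of `π` containing `x`, as a finset. -/
def cycleOfF (π : Equiv.Perm (Fin n)) (x : Fin n) : Finset (Fin n) :=
  (Finset.range n).image fun k => (⇑π)^[k] x

/-- `iSeq π b i k` is the element `i_{k+1}` of the `b`-staircase from `i`:
`i_1 = i` and `i_{k+1} = π_k^b(i_k)`. -/
noncomputable def iSeq (π : Equiv.Perm (Fin n)) (b : ℕ) (i : Fin n) : ℕ → Fin n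
  | 0 => i
  | k + 1 => stepB π b (level π b k) (iSeq π b i k)

/-- `jSeq π b r m q` is the element `j_{r+1-q}` of the descending part of the `b`-staircase of
size `r` with middle `m`: `j_{r+1} = m` and `j_k = π_k^b(j_{k+1})`. -/
noncomputable def jSeq (π : Equiv.Perm (Fin n)) (b : ℕ) (r : ℕ) (m : Fin n) : ℕ → Fin n
  | 0 => m
  | q + 1 => stepB π b (level π b (r - (q + 1))) (jSeq π b r m q)

/-- The sequence `(i = i_1, …, i_{r+1} = m = j_{r+1}, j_r, …, j_1 = i')` is a `b`-staircase of
size `r` from `i`: `i_k, j_k ∈ E_k` for all `k ∈ [r+1]`. -/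
def IsStaircase (π : Equiv.Perm (Fin n)) (b r : ℕ) (i : Fin n) : Prop :=
  ∀ k ≤ r, iSeq π b i k ∈ level π b k ∧
    jSeq π b r (iSeq π b i r) k ∈ level π b (r - k)

/-- An almost `b`-staircase of size `r` from `i`: membership `i_k, j_k ∈ E_k` is required only
for `k ∈ [r]`. -/
def IsAlmost (π : Equiv.Perm (Fin n)) (b r : ℕ) (i : Fin n) : Prop :=
  (∀ k < r, iSeq π b i k ∈ level π b k) ∧
  (∀ q, 1 ≤ q → q ≤ r → jSeq π b r (iSeq π b i r) q ∈ level π b (r - q))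

/-- The `b`-staircase of size `r` from `i` is the best `b`-staircase from `i`: there is no
proper (i.e. with `|E_{r+1} ∩ C| > b`, where `C` is the cycle of `i`) almost `b`-staircase of
size `r+1` from `i`. -/
def IsBest (π : Equiv.Perm (Fin n)) (b r : ℕ) (i : Fin n) : Prop :=
  IsStaircase π b r i ∧
    ¬ (IsAlmost π b (r + 1) i ∧ b < ((level π b r) ∩ cycleOfF π i).card)

/-- Fich et al.'s (`b = 1`) notion: the staircase of size `r` from `i` is the best staircase
from `i`, where an almost staircase of size `r+1` is proper iff `i_{r+1} ≠ m'` (its middle). -/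
def IsBest1 (π : Equiv.Perm (Fin n)) (r : ℕ) (i : Fin n) : Prop :=
  IsStaircase π 1 r i ∧
    ¬ (IsAlmost π 1 (r + 1) i ∧ iSeq π 1 i r ≠ iSeq π 1 i (r + 1))


section NextIn

variable (π : Equiv.Perm (Fin n)) {E : Finset (Fin n)} {x : Fin n}

lemma exists_iterate_mem_of_mem (hx : x ∈ E) : ∃ k, 0 < k ∧ (⇑π)^[k] x ∈ E :=
  ⟨orderOf π, orderOf_pos π, by
    rwa [Equiv.Perm.iterate_eq_pow, pow_orderOf_eq_one, Equiv.Perm.one_apply]⟩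

lemma nextIn_eq_iterate_find (hx : x ∈ E) :
    nextIn π E x = (⇑π)^[Nat.find (exists_iterate_mem_of_mem π hx)] x :=
  dif_pos _

lemma nextIn_mem (hx : x ∈ E) : nextIn π E x ∈ E := by
  rw [nextIn_eq_iterate_find π hx]
  exact (Nat.find_spec (exists_iterate_mem_of_mem π hx)).2

lemma sameCycle_nextIn (E : Finset (Fin n)) (x : Fin n) : π.SameCycle x (nextIn π E x) := by
  unfold nextIn
  split
  · exact ⟨Nat.find ‹_›, by rw [zpow_natCast, Equiv.Perm.iterate_eq_pow]⟩
  · rfl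

lemma inv_iterate_iterate_of_le {a k : ℕ} (h : a ≤ k) (x : Fin n) :
    (⇑π⁻¹)^[a] ((⇑π)^[k] x) = (⇑π)^[k - a] x := by
  obtain ⟨d, rfl⟩ := Nat.exists_eq_add_of_le h
  rw [Function.iterate_add_apply, Nat.add_sub_cancel_left]
  exact π.left_inv.iterate a _

/-- Walking back along `π⁻¹` from the first return to `E` retraces the same steps, none of whose
intermediate points lies in `E`. -/
lemma nextIn_inv_nextIn (hx : x ∈ E) : nextIn π⁻¹ E (nextIn π E x) = x := by
  have h := exists_iterate_mem_of_mem π hx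
  have hback : ∀ j ≤ Nat.find h, (⇑π⁻¹)^[j] (nextIn π E x) = (⇑π)^[Nat.find h - j] x :=
    fun j hj => by rw [nextIn_eq_iterate_find π hx, inv_iterate_iterate_of_le π hj]
  have hfind : Nat.find (exists_iterate_mem_of_mem π⁻¹ (nextIn_mem π hx)) = Nat.find h := by
    rw [Nat.find_eq_iff]
    refine ⟨⟨(Nat.find_spec h).1, by rwa [hback _ le_rfl, Nat.sub_self]⟩, ?_⟩
    rintro j hj ⟨hj0, hjE⟩
    rw [hback j hj.le] at hjE
    exact Nat.find_min h (by omega : Nat.find h - j < Nat.find h) ⟨by omega, hjE⟩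
  rw [nextIn_eq_iterate_find π⁻¹ (nextIn_mem π hx), hfind, hback _ le_rfl, Nat.sub_self,
    Function.iterate_zero_apply]

lemma stepB_mem (b : ℕ) (hx : x ∈ E) : stepB π b E x ∈ E := by
  induction b with
  | zero => exact hx
  | succ b ih =>
    rw [stepB, Function.iterate_succ_apply']
    exact nextIn_mem π ih

lemma sameCycle_stepB (b : ℕ) (E : Finset (Fin n)) (x : Fin n) :
    π.SameCycle x (stepB π b E x) := by
  induction b with
  | zero => rfl
  | succ b ih =>
    rw [stepB, Function.iterate_succ_apply']
    exact ih.trans (sameCycle_nextIn π E _)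

lemma stepB_inv_stepB (b : ℕ) (hx : x ∈ E) : stepB π⁻¹ b E (stepB π b E x) = x := by
  induction b with
  | zero => rfl
  | succ b ih =>
    have hmem : (nextIn π E)^[b] x ∈ E := stepB_mem π b hx
    rw [stepB, stepB, Function.iterate_succ_apply, Function.iterate_succ_apply',
      nextIn_inv_nextIn π hmem]
    exact ih

end NextIn

lemma level_inv (π : Equiv.Perm (Fin n)) (b k : ℕ) : level π⁻¹ b k = level π b k := by
  induction k with
  | zero => rfl
  | succ k ih =>
    ext x
    simp only [level, ih, inv_inv, Finset.mem_filter]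
    tauto

lemma level_antitone (π : Equiv.Perm (Fin n)) (b : ℕ) : Antitone (level π b) :=
  antitone_nat_of_succ_le fun _ _ hx => by
    simp only [level, Finset.mem_filter] at hx
    exact hx.1

lemma mem_cycleOfF {π : Equiv.Perm (Fin n)} {x y : Fin n} :
    y ∈ cycleOfF π x ↔ π.SameCycle x y := by
  refine ⟨?_, fun h => ?_⟩
  · rw [cycleOfF, Finset.mem_image]
    rintro ⟨k, -, rfl⟩
    exact ⟨k, by rw [zpow_natCast, Equiv.Perm.iterate_eq_pow]⟩
  · obtain ⟨k, rfl⟩ := h.exists_nat_pow_eq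
    have hper := Function.minimalPeriod_pos_of_mem_periodicPts (π.injective.mem_periodicPts x)
    have hle : Function.minimalPeriod π x ≤ n := by
      simpa using Function.minimalPeriod_le_card (f := π) (x := x)
    rw [cycleOfF, Finset.mem_image]
    exact ⟨k % Function.minimalPeriod π x, Finset.mem_range.2 ((Nat.mod_lt _ hper).trans_le hle),
      by rw [Function.iterate_mod_minimalPeriod_eq, Equiv.Perm.iterate_eq_pow]⟩

lemma cycleOfF_inv_of_sameCycle {π : Equiv.Perm (Fin n)} {x y : Fin n} (h : π.SameCycle x y) :
    cycleOfF π⁻¹ y = cycleOfF π x := by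
  ext z
  rw [mem_cycleOfF, mem_cycleOfF, Equiv.Perm.sameCycle_inv]
  exact ⟨h.trans, h.symm.trans⟩

section Staircase

variable (π : Equiv.Perm (Fin n)) {b r : ℕ} {i m : Fin n}

lemma sameCycle_iSeq (b : ℕ) (i : Fin n) (k : ℕ) : π.SameCycle i (iSeq π b i k) := by
  induction k with
  | zero => rfl
  | succ k ih => exact ih.trans (sameCycle_stepB π b _ _)

lemma sameCycle_jSeq (b r : ℕ) (m : Fin n) (q : ℕ) : π.SameCycle m (jSeq π b r m q) := by
  induction q with
  | zero => rfl
  | succ q ih => exact ih.trans (sameCycle_stepB π b _ _)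

lemma jSeq_mem_level (hm : m ∈ level π b (r - 1)) {q : ℕ} (hq : 1 ≤ q) :
    jSeq π b r m q ∈ level π b (r - q) := by
  induction q, hq using Nat.le_induction with
  | base => exact stepB_mem π b hm
  | succ q _ ih => exact stepB_mem π b (level_antitone π b (by omega) ih)

lemma jSeq_sub_of_lt {k : ℕ} (h : k < r) :
    jSeq π b r m (r - k) = stepB π b (level π b k) (jSeq π b r m (r - (k + 1))) := by
  rw [show r - k = r - (k + 1) + 1 by omega, jSeq, show r - (r - (k + 1) + 1) = k by omega]

lemma iSeq_inv_jSeq (hj : ∀ q ≤ r, jSeq π b r m q ∈ level π b (r - q)) :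
    ∀ k ≤ r, iSeq π⁻¹ b (jSeq π b r m r) k = jSeq π b r m (r - k) := by
  intro k hk
  induction k with
  | zero => rfl
  | succ k ih =>
    have hmem : jSeq π b r m (r - (k + 1)) ∈ level π b k :=
      level_antitone π b (by omega) (hj (r - (k + 1)) (by omega))
    rw [iSeq, ih (by omega), level_inv, jSeq_sub_of_lt π (by omega), stepB_inv_stepB π b hmem]

lemma jSeq_inv_iSeq (hi : ∀ k ≤ r, iSeq π b i k ∈ level π b k) :
    ∀ q ≤ r, jSeq π⁻¹ b r (iSeq π b i r) q = iSeq π b i (r - q) := by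
  intro q hq
  induction q with
  | zero => rfl
  | succ q ih =>
    rw [jSeq, ih (by omega), level_inv, show r - q = r - (q + 1) + 1 by omega]
    exact stepB_inv_stepB π b (hi _ (by omega))

variable {π}

lemma IsStaircase.isAlmost_succ (h : IsStaircase π b r i) : IsAlmost π b (r + 1) i :=
  ⟨fun k hk => (h k (by omega)).1,
    fun _ hq _ => jSeq_mem_level π (stepB_mem π b (h r le_rfl).1) hq⟩

lemma IsStaircase.iSeq_inv_middle (h : IsStaircase π b r i) :
    iSeq π⁻¹ b (jSeq π b r (iSeq π b i r) r) r = iSeq π b i r := by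
  rw [iSeq_inv_jSeq π (fun q hq => (h q hq).2) r le_rfl, Nat.sub_self]
  rfl

lemma IsStaircase.inv (h : IsStaircase π b r i) :
    IsStaircase π⁻¹ b r (jSeq π b r (iSeq π b i r) r) := by
  intro k hk
  rw [h.iSeq_inv_middle, iSeq_inv_jSeq π (fun q hq => (h q hq).2) k hk, jSeq_inv_iSeq π (fun k hk => (h k hk).1) k hk, level_inv,
    level_inv]
  exact ⟨by simpa [Nat.sub_sub_self hk] using (h (r - k) (by omega)).2, (h (r - k) (by omega)).1⟩

lemma IsBest.inv (h : IsBest π b r i) : IsBest π⁻¹ b r (jSeq π b r (iSeq π b i r) r) := by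
  refine ⟨h.1.inv, fun ⟨_, hcard⟩ => h.2 ⟨h.1.isAlmost_succ, ?_⟩⟩
  rwa [level_inv, cycleOfF_inv_of_sameCycle
    ((sameCycle_iSeq π b i r).trans (sameCycle_jSeq π b r _ r))] at hcard

end Staircase

theorem best_staircase_of_inverse_general (n b : ℕ) (π : Equiv.Perm (Fin n))
    (i : Fin n) (C : Finset (Fin n))
    (r : ℕ) (hbest : IsBest π b r i)
    (m : Fin n) (hm : m = iSeq π b i r)
    (i' : Fin n) (hi' : i' = jSeq π b r m r) :
    (∀ k, (level π⁻¹ b k) ∩ C = (level π b k) ∩ C) ∧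
    IsBest π⁻¹ b r i' ∧
    (∀ k ≤ r, iSeq π⁻¹ b i' k = jSeq π b r m (r - k)) ∧
    (∀ q ≤ r, jSeq π⁻¹ b r m q = iSeq π b i (r - q)) ∧
    iSeq π⁻¹ b i' r = m := by
  subst hm hi'
  exact ⟨fun k => by rw [level_inv], hbest.inv, iSeq_inv_jSeq π fun q hq => (hbest.1 q hq).2,
    jSeq_inv_iSeq π fun k hk => (hbest.1 k hk).1, hbest.1.iSeq_inv_middle⟩

/-- Let `C` be a cycle of `π` and let
`(i = i_1, …, i_{r+1} = m = j_{r+1}, j_r, …, j_1 = i')` be the best `b`-staircase on `C` with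
respect to `π`.  Then for every `k` the level sets computed for `π⁻¹` satisfy
`E_k(π⁻¹) ∩ C = E_k(π) ∩ C`, and the reversed sequence is the best `b`-staircase on the cycle
`C` of `π⁻¹`; in particular the middle of the best `b`-staircase is unchanged by inverting the
cycle. -/
theorem best_staircase_of_inverse (n b : ℕ) (hb : 1 ≤ b) (π : Equiv.Perm (Fin n))
    (i : Fin n) (C : Finset (Fin n)) (hC : C = cycleOfF π i)
    (r : ℕ) (hbest : IsBest π b r i)
    (m : Fin n) (hm : m = iSeq π b i r)
    (i' : Fin n) (hi' : i' = jSeq π b r m r) :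
    (∀ k, (level π⁻¹ b k) ∩ C = (level π b k) ∩ C) ∧
    IsBest π⁻¹ b r i' ∧
    (∀ k ≤ r, iSeq π⁻¹ b i' k = jSeq π b r m (r - k)) ∧
    (∀ q ≤ r, jSeq π⁻¹ b r m q = iSeq π b i (r - q)) ∧
    iSeq π⁻¹ b i' r = m :=
  best_staircase_of_inverse_general n b π i C r hbest m hm i' hi'
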